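/- arXiv:1611.01202 — 5 statements merged into one kernel-verified Lean document; each statement's English description precedes it below -/
import Mathlib

section
/- The polynomials d_{j,n}(t) := Σ_{i=j}^{n} Φ_{i,j} L_i(t), where Φ_{i,j} := (2i+1)(-i)_j(i+1)_j(j!)^{-2}, form the dual basis for the power basis 1, t, ..., t^n of the space of polynomials of degree at most n with respect to the L² inner product on [0,1]; that is, ∫_0^1 t^i · d_{j,n}(t) dt = δ_{i,j} for all 0 ≤ i, j ≤ n. -/
open Polynomial Finset intervalIntegral

lemma poly_intervalIntegrable (p : ℝ[X]) (a b : ℝ) :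
    IntervalIntegrable (fun t => p.eval t) MeasureTheory.volume a b :=
  (p.continuous).intervalIntegrable a b

lemma integral_eval_deriv (p : ℝ[X]) :
    (∫ t in (0:ℝ)..1, (derivative p).eval t) = p.eval 1 - p.eval 0 := by
  apply intervalIntegral.integral_deriv_eq_sub' (fun t => p.eval t)
  · funext x; exact (Polynomial.deriv p).symm ▸ rfl
  · intro x _; exact p.differentiable.differentiableAt
  · exact (derivative p).continuous.continuousOn

lemma integral_parts (p q : ℝ[X]) :
    (∫ t in (0:ℝ)..1, p.eval t * (derivative q).eval t)
      = p.eval 1 * q.eval 1 - p.eval 0 * q.eval 0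
        - ∫ t in (0:ℝ)..1, (derivative p).eval t * q.eval t := by
  have h := integral_eval_deriv (p * q)
  rw [derivative_mul] at h
  have : (∫ t in (0:ℝ)..1, ((derivative p * q + p * derivative q)).eval t)
      = (∫ t in (0:ℝ)..1, (derivative p).eval t * q.eval t)
        + ∫ t in (0:ℝ)..1, p.eval t * (derivative q).eval t := by
    simp only [eval_add, eval_mul]
    rw [intervalIntegral.integral_add (f := fun t => (derivative p).eval t * q.eval t)
      (g := fun t => p.eval t * (derivative q).eval t)
      (((derivative p).continuous.mul q.continuous).intervalIntegrable _ _)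
      ((p.continuous.mul (derivative q).continuous).intervalIntegrable _ _)]
  rw [this] at h
  simp only [eval_mul] at h ⊢
  linarith

lemma dvd_deriv {a : ℝ} {p : ℝ[X]} {j : ℕ} (h : (X - C a)^(j+1) ∣ p) :
    (X - C a)^j ∣ derivative p := by
  obtain ⟨q, rfl⟩ := h
  rw [derivative_mul]
  apply dvd_add
  · rw [derivative_pow]
    exact Dvd.dvd.mul_right (Dvd.dvd.mul_right (by simp [pow_dvd_pow _ (by omega : j ≤ j+1-1)]) _) _
  · exact Dvd.dvd.mul_right (pow_dvd_pow _ (by omega)) _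

lemma dvd_iter_deriv {a : ℝ} {p : ℝ[X]} {k m : ℕ} (h : (X - C a)^k ∣ p) (hm : m ≤ k) :
    (X - C a)^(k - m) ∣ derivative^[m] p := by
  induction m with
  | zero => simpa using h
  | succ m ih =>
    rw [Function.iterate_succ_apply']
    have h2 : (X - C a) ^ (k - m - 1 + 1) ∣ derivative^[m] p := by
      have : k - m - 1 + 1 = k - m := by omega
      rw [this]; exact ih (by omega)
    have := dvd_deriv h2
    have e : k - (m+1) = k - m - 1 := by omega
    rw [e]; exact this

noncomputable def gP (k : ℕ) : ℝ[X] := (1 - X)^k * X^k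

lemma gP_root_zero {k m : ℕ} (h : m < k) : (derivative^[m] (gP k)).eval 0 = 0 := by
  have hd : (X - C (0:ℝ))^k ∣ gP k := by
    simp only [map_zero, sub_zero, gP]
    exact Dvd.dvd.mul_left (dvd_refl _) _
  have := dvd_iter_deriv hd h.le
  obtain ⟨q, hq⟩ := this
  rw [hq]
  simp [eval_pow, zero_pow (by omega : k - m ≠ 0)]

lemma gP_root_one {k m : ℕ} (h : m < k) : (derivative^[m] (gP k)).eval 1 = 0 := by
  have hd : (X - C (1:ℝ))^k ∣ gP k := by
    have e : ((1 : ℝ[X]) - X)^k = (C (-1))^k * (X - C 1)^k := by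
      rw [← mul_pow]
      congr 1
      simp only [map_neg, map_one]
      ring
    rw [gP, e, mul_assoc]
    exact Dvd.dvd.mul_left (Dvd.dvd.mul_right (dvd_refl _) _) _
  obtain ⟨q, hq⟩ := dvd_iter_deriv hd h.le
  rw [hq]
  simp [eval_pow, zero_pow (by omega : k - m ≠ 0)]

lemma parts_iter (k : ℕ) (p : ℝ[X]) :
    ∀ m, m ≤ k → (∫ t in (0:ℝ)..1, p.eval t * (derivative^[k] (gP k)).eval t)
      = (-1:ℝ)^m * ∫ t in (0:ℝ)..1,
          (derivative^[m] p).eval t * (derivative^[k-m] (gP k)).eval t := by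
  intro m
  induction m with
  | zero => simp
  | succ m ih =>
    intro hm
    rw [ih (by omega)]
    have e1 : k - m = (k - (m+1)) + 1 := by omega
    have e2 : derivative^[k-m] (gP k) = derivative (derivative^[k - (m+1)] (gP k)) := by
      rw [e1, Function.iterate_succ_apply']
    rw [e2, integral_parts]
    rw [gP_root_zero (by omega : k - (m+1) < k), gP_root_one (by omega : k - (m+1) < k)]
    rw [← Function.iterate_succ_apply' derivative m p]
    ring

lemma integral_mul_iterk (k : ℕ) (p : ℝ[X]) :
    (∫ t in (0:ℝ)..1, p.eval t * (derivative^[k] ((1 - X)^k * X^k : ℝ[X])).eval t)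
      = (-1:ℝ)^k * ∫ t in (0:ℝ)..1,
          (derivative^[k] p).eval t * ((1-t)^k * t^k) := by
  have := parts_iter k p k le_rfl
  simp only [Nat.sub_self, Function.iterate_zero_apply] at this
  rw [show ((1 - X)^k * X^k : ℝ[X]) = gP k from rfl, this]
  congr 1
  apply intervalIntegral.integral_congr
  intro t _
  simp [gP, eval_pow, eval_mul]

lemma beta_nat : ∀ (b a : ℕ), (∫ t in (0:ℝ)..1, t^a * (1-t)^b)
    = (a.factorial * b.factorial : ℝ) / ((a+b+1).factorial) := by
  intro b
  induction b with
  | zero =>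
    intro a
    simp only [pow_zero, mul_one, Nat.factorial_zero, Nat.cast_one, Nat.add_zero]
    rw [integral_pow]
    rw [Nat.factorial_succ]
    push_cast
    rw [one_pow, zero_pow (by omega : a + 1 ≠ 0)]
    field_simp
    norm_num
  | succ b ih =>
    intro a
    have h := integral_parts (X^(a+1)) ((1-X)^(b+1))
    have hd : derivative ((1-X:ℝ[X])^(b+1)) = C (-((b:ℝ)+1)) * (1-X)^b := by
      rw [derivative_pow]
      simp only [derivative_sub, derivative_one, derivative_X, zero_sub, Nat.add_sub_cancel]
      push_cast
      ring_nf
      simp [map_neg, map_add, map_one]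
      ring
    rw [hd, derivative_X_pow] at h
    simp only [eval_mul, eval_pow, eval_C, eval_sub, eval_one, eval_X, Nat.add_sub_cancel,
      Nat.cast_add, Nat.cast_one, one_pow, zero_pow (by omega : a + 1 ≠ 0), sub_zero,
      zero_mul, mul_zero, sub_self, one_mul] at h
    have h1 : (∫ t in (0:ℝ)..1, t^(a+1) * (-((b:ℝ)+1) * (1-t)^b))
        = -((b:ℝ)+1) * ∫ t in (0:ℝ)..1, t^(a+1) * (1-t)^b := by
      rw [← intervalIntegral.integral_const_mul]
      apply intervalIntegral.integral_congr
      intro t _; ring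
    have h2 : (∫ t in (0:ℝ)..1, ((a:ℝ)+1) * t^a * (1-t)^(b+1))
        = ((a:ℝ)+1) * ∫ t in (0:ℝ)..1, t^a * (1-t)^(b+1) := by
      rw [← intervalIntegral.integral_const_mul]
      apply intervalIntegral.integral_congr
      intro t _; ring
    rw [h1, h2, ih (a+1)] at h
    have ha : ((a:ℝ)+1) ≠ 0 := by positivity
    have key : (∫ t in (0:ℝ)..1, t^a * (1-t)^(b+1))
        = ((b:ℝ)+1) * ((((a+1).factorial : ℝ) * (b.factorial : ℝ)) / ((a+1+b+1).factorial))
          / ((a:ℝ)+1) := by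
      field_simp at h ⊢
      rw [zero_pow (by omega : b + 1 ≠ 0)] at h
      linarith [h]
    rw [key]
    have e1 : a + 1 + b + 1 = a + (b+1) + 1 := by omega
    rw [e1]
    rw [Nat.factorial_succ a, Nat.factorial_succ b]
    push_cast
    have hf : ((a + (b+1) + 1).factorial : ℝ) ≠ 0 := by positivity
    field_simp

noncomputable def shiftedLegendre (i : ℕ) : Polynomial ℝ :=
  Polynomial.C ((i.factorial : ℝ))⁻¹ *
    Polynomial.derivative^[i] ((1 - Polynomial.X) ^ i * Polynomial.X ^ i)

lemma expand_g (k : ℕ) : ((1:ℝ[X]) - X)^k * X^k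
    = ∑ s ∈ range (k+1), C ((-1:ℝ)^s * (k.choose s)) * X^(k+s) := by
  rw [sub_eq_add_neg, add_comm, add_pow, Finset.sum_mul]
  apply Finset.sum_congr rfl
  intro s hs
  rw [neg_pow]
  simp only [one_pow, map_mul, map_pow, map_neg, map_one, map_natCast, pow_add]
  ring

lemma shiftedLegendre_eq (k : ℕ) : _root_.shiftedLegendre k
    = ∑ s ∈ range (k+1),
        C ((k.factorial:ℝ)⁻¹ * ((-1:ℝ)^s * (k.choose s)) * ((k+s).descFactorial k)) * X^s := by
  rw [_root_.shiftedLegendre, expand_g, iterate_derivative_sum, Finset.mul_sum]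
  apply Finset.sum_congr rfl
  intro s hs
  rw [iterate_derivative_C_mul, iterate_derivative_X_pow_eq_C_mul]
  rw [show k + s - k = s by omega]
  simp only [C_mul, C_pow, map_neg, map_one, map_natCast, map_inv₀]
  ring

lemma shiftedLegendre_coeff (k j : ℕ) : (_root_.shiftedLegendre k).coeff j
    = if j ≤ k then (k.factorial:ℝ)⁻¹ * ((-1:ℝ)^j * (k.choose j)) * ((k+j).descFactorial k)
      else 0 := by
  rw [shiftedLegendre_eq, finset_sum_coeff]
  simp only [coeff_C_mul, coeff_X_pow]
  rw [Finset.sum_eq_single j]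
  · by_cases h : j ≤ k
    · simp [h]
    · rw [if_neg h, if_pos rfl, Nat.choose_eq_zero_of_lt (by omega)]
      simp
  · intro b _ hb
    rw [if_neg (fun he => hb he.symm), mul_zero]
  · intro h
    simp only [Finset.mem_range, Nat.lt_succ_iff, not_le] at h
    rw [Nat.choose_eq_zero_of_lt (by omega)]
    simp

lemma shiftedLegendre_natDegree_le (k : ℕ) : (_root_.shiftedLegendre k).natDegree ≤ k := by
  rw [shiftedLegendre_eq]
  apply Polynomial.natDegree_sum_le_of_forall_le
  intro s hs
  apply le_trans (natDegree_C_mul_le _ _)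
  simp only [natDegree_X_pow]
  exact Nat.lt_succ_iff.mp (Finset.mem_range.mp hs)

noncomputable def Phi (i j : ℕ) : ℝ :=
  (2 * (i : ℝ) + 1) * (ascPochhammer ℝ j).eval (-(i : ℝ)) *
    (ascPochhammer ℝ j).eval ((i : ℝ) + 1) * ((Nat.factorial j : ℝ))⁻¹ ^ 2

lemma asc_neg {j k : ℕ} (h : j ≤ k) :
    (ascPochhammer ℝ j).eval (-(k:ℝ)) * ((k-j).factorial : ℝ)
      = (-1:ℝ)^j * (k.factorial : ℝ) := by
  induction j with
  | zero => simp
  | succ j ih =>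
    have hj : j ≤ k := by omega
    have ihe := ih hj
    rw [ascPochhammer_succ_right, eval_mul]
    have e1 : ((k - (j+1)).factorial : ℝ) * ((k:ℝ) - j)  = ((k - j).factorial : ℝ) := by
      have : k - j = (k - (j+1)) + 1 := by omega
      rw [this, Nat.factorial_succ]
      push_cast [Nat.cast_sub hj]
      have : ((k:ℝ) - (j+1) + 1) = (k:ℝ) - j := by ring
      rw [Nat.cast_sub (by omega : j+1 ≤ k)]
      push_cast
      ring
    rw [eval_add, eval_X, eval_natCast]
    calc eval (-(k:ℝ)) (ascPochhammer ℝ j) * (-(k:ℝ) + j) * ((k - (j+1)).factorial : ℝ)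
        = -(eval (-(k:ℝ)) (ascPochhammer ℝ j) * (((k - (j+1)).factorial : ℝ) * ((k:ℝ) - j))) := by
          ring
      _ = -(eval (-(k:ℝ)) (ascPochhammer ℝ j) * ((k - j).factorial : ℝ)) := by rw [e1]
      _ = (-1:ℝ)^(j+1) * (k.factorial : ℝ) := by rw [ihe]; ring

lemma asc_neg_zero {j k : ℕ} (h : k < j) :
    (ascPochhammer ℝ j).eval (-(k:ℝ)) = 0 := by
  induction j with
  | zero => omega
  | succ j ih =>
    rw [ascPochhammer_succ_right, eval_mul]
    by_cases hk : k < j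
    · rw [ih hk, zero_mul]
    · have : k = j := by omega
      subst this
      simp

lemma asc_pos (j k : ℕ) :
    (ascPochhammer ℝ j).eval ((k:ℝ)+1) * (k.factorial : ℝ) = ((k+j).factorial : ℝ) := by
  induction j with
  | zero => simp
  | succ j ih =>
    rw [ascPochhammer_succ_right, eval_mul]
    rw [eval_add, eval_X, eval_natCast]
    calc eval ((k:ℝ)+1) (ascPochhammer ℝ j) * ((k:ℝ) + 1 + j) * (k.factorial : ℝ)
        = eval ((k:ℝ)+1) (ascPochhammer ℝ j) * (k.factorial : ℝ) * ((k:ℝ) + j + 1) := by ring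
      _ = ((k+j).factorial : ℝ) * ((k:ℝ) + j + 1) := by rw [ih]
      _ = ((k + (j+1)).factorial : ℝ) := by
          rw [show k + (j+1) = (k+j) + 1 by omega, Nat.factorial_succ]
          push_cast; ring

lemma Phi_eq (k j : ℕ) : Phi k j = (2*(k:ℝ)+1) * (_root_.shiftedLegendre k).coeff j := by
  rw [shiftedLegendre_coeff]
  by_cases h : j ≤ k
  · rw [if_pos h, Phi]
    have h1 := asc_neg h
    have h2 := asc_pos j k
    have hkj : ((k-j).factorial : ℝ) ≠ 0 := by positivity
    have hk : ((k).factorial : ℝ) ≠ 0 := by positivity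
    have hj : ((j).factorial : ℝ) ≠ 0 := by positivity
    have e1 : (ascPochhammer ℝ j).eval (-(k:ℝ)) = (-1:ℝ)^j * (k.factorial : ℝ) / ((k-j).factorial : ℝ) := by
      field_simp at h1 ⊢; linarith [h1]
    have e2 : (ascPochhammer ℝ j).eval ((k:ℝ)+1) = ((k+j).factorial : ℝ) / (k.factorial : ℝ) := by
      field_simp at h2 ⊢; linarith [h2]
    rw [e1, e2]
    have c1 : (k.choose j : ℝ) = (k.factorial : ℝ) / ((j.factorial : ℝ) * ((k-j).factorial : ℝ)) := by
      rw [eq_div_iff (by positivity)]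
      norm_cast
      rw [← Nat.choose_mul_factorial_mul_factorial h, mul_assoc]
    have c2 : (((k+j).descFactorial k : ℕ) : ℝ) = ((k+j).factorial : ℝ) / ((j.factorial : ℝ)) := by
      rw [eq_div_iff hj]
      norm_cast
      rw [mul_comm]
      have := Nat.factorial_mul_descFactorial (show k ≤ k + j by omega)
      rw [show k + j - k = j by omega] at this
      exact this
    rw [c1, c2]
    field_simp
  · rw [if_neg h, Phi, asc_neg_zero (show k < j by omega)]
    ring

lemma integral_mul_legendre (k : ℕ) (p : ℝ[X]) :
    (∫ t in (0:ℝ)..1, p.eval t * (_root_.shiftedLegendre k).eval t)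
      = (k.factorial:ℝ)⁻¹ * (-1:ℝ)^k
        * ∫ t in (0:ℝ)..1, (derivative^[k] p).eval t * ((1-t)^k * t^k) := by
  have h1 : (∫ t in (0:ℝ)..1, p.eval t * (_root_.shiftedLegendre k).eval t)
      = (k.factorial:ℝ)⁻¹ * ∫ t in (0:ℝ)..1,
          p.eval t * (derivative^[k] ((1 - X)^k * X^k : ℝ[X])).eval t := by
    rw [← intervalIntegral.integral_const_mul]
    apply intervalIntegral.integral_congr
    intro t _
    simp only [_root_.shiftedLegendre, eval_mul, eval_C]
    ring
  rw [h1, integral_mul_iterk, mul_assoc]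

noncomputable def Mval (i k : ℕ) : ℝ :=
  (-1:ℝ)^k * (i.descFactorial k : ℝ) * (((i-k)+k).factorial : ℝ)
    / (((i-k)+k+k+1).factorial : ℝ)

lemma M_val (i k : ℕ) :
    (∫ t in (0:ℝ)..1, t^i * (_root_.shiftedLegendre k).eval t) = Mval i k := by
  have h0 : (∫ t in (0:ℝ)..1, t^i * (_root_.shiftedLegendre k).eval t)
      = ∫ t in (0:ℝ)..1, (X^i : ℝ[X]).eval t * (_root_.shiftedLegendre k).eval t := by
    apply intervalIntegral.integral_congr; intro t _; simp only [eval_pow, eval_X]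
  rw [h0, integral_mul_legendre, iterate_derivative_X_pow_eq_C_mul]
  have h2 : (∫ t in (0:ℝ)..1, (C ((i.descFactorial k : ℝ)) * X^(i-k)).eval t * ((1-t)^k * t^k))
      = (i.descFactorial k : ℝ) * ∫ t in (0:ℝ)..1, t^((i-k)+k) * (1-t)^k := by
    rw [← intervalIntegral.integral_const_mul]
    apply intervalIntegral.integral_congr
    intro t _
    simp only [eval_mul, eval_C, eval_pow, eval_X, pow_add]
    ring
  rw [h2, beta_nat, Mval]
  field_simp

lemma orth (m k : ℕ) (h : m ≠ k) :
    (∫ t in (0:ℝ)..1, (_root_.shiftedLegendre m).eval t * (_root_.shiftedLegendre k).eval t) = 0 := by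
  rcases Nat.lt_or_ge m k with hlt | hge
  · rw [integral_mul_legendre]
    rw [Polynomial.iterate_derivative_eq_zero (lt_of_le_of_lt (shiftedLegendre_natDegree_le m) hlt)]
    simp
  · have hlt : k < m := by omega
    have hc : (∫ t in (0:ℝ)..1, (_root_.shiftedLegendre m).eval t * (_root_.shiftedLegendre k).eval t)
        = ∫ t in (0:ℝ)..1, (_root_.shiftedLegendre k).eval t * (_root_.shiftedLegendre m).eval t := by
      apply intervalIntegral.integral_congr; intro t _; ring
    rw [hc, integral_mul_legendre]
    rw [Polynomial.iterate_derivative_eq_zero (lt_of_le_of_lt (shiftedLegendre_natDegree_le k) hlt)]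
    simp

lemma iter_deriv_legendre_self (k : ℕ) :
    derivative^[k] (_root_.shiftedLegendre k)
      = C ((k.factorial:ℝ)⁻¹ * ((-1:ℝ)^k * ((2*k).descFactorial k)) * (k.factorial : ℝ)) := by
  rw [shiftedLegendre_eq, iterate_derivative_sum]
  rw [Finset.sum_eq_single k]
  · rw [iterate_derivative_C_mul, iterate_derivative_X_pow_eq_C_mul, Nat.sub_self, pow_zero,
      mul_one, ← C_mul, Nat.descFactorial_self, Nat.choose_self, Nat.cast_one, mul_one]
    rw [show k + k = 2*k by omega]
    ring_nf
  · intro s hs hne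
    have hsk : s < k := by
      have := Finset.mem_range.mp hs; omega
    rw [iterate_derivative_C_mul, iterate_derivative_X_pow_eq_C_mul,
      Nat.descFactorial_eq_zero_iff_lt.mpr hsk]
    simp
  · intro hk; exact absurd (Finset.self_mem_range_succ k) hk

lemma orth_self (k : ℕ) :
    (∫ t in (0:ℝ)..1, (_root_.shiftedLegendre k).eval t * (_root_.shiftedLegendre k).eval t)
      = 1 / (2*(k:ℝ)+1) := by
  rw [integral_mul_legendre, iter_deriv_legendre_self]
  have h2 : (∫ t in (0:ℝ)..1,
      (C ((k.factorial:ℝ)⁻¹ * ((-1:ℝ)^k * ((2*k).descFactorial k)) * (k.factorial : ℝ))).eval t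
        * ((1-t)^k * t^k))
      = ((k.factorial:ℝ)⁻¹ * ((-1:ℝ)^k * ((2*k).descFactorial k)) * (k.factorial : ℝ))
        * ∫ t in (0:ℝ)..1, t^k * (1-t)^k := by
    rw [← intervalIntegral.integral_const_mul]
    apply intervalIntegral.integral_congr
    intro t _
    simp only [eval_C]
    ring
  rw [h2, beta_nat]
  have hd : ((2*k).descFactorial k : ℝ) * (k.factorial : ℝ) = ((2*k).factorial : ℝ) := by
    norm_cast
    rw [mul_comm]
    have := Nat.factorial_mul_descFactorial (show k ≤ 2*k by omega)
    rw [show 2*k - k = k by omega] at this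
    exact this
  have e1 : k + k + 1 = (2*k) + 1 := by omega
  rw [e1, Nat.factorial_succ]
  have hk : (k.factorial : ℝ) ≠ 0 := by positivity
  have h2k : ((2*k).factorial : ℝ) ≠ 0 := by positivity
  have h2k1 : (2*(k:ℝ)+1) ≠ 0 := by positivity
  have hpow : (-1:ℝ)^(k*2) = 1 := by rw [mul_comm, pow_mul]; norm_num
  field_simp
  push_cast [← hd]
  have hss : (-1:ℝ)^k * (-1:ℝ)^k = 1 := by
    rw [← pow_add]
    exact Even.neg_one_pow ⟨k, rfl⟩
  linear_combination (((2*k).descFactorial k : ℝ) * (k.factorial:ℝ)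
    * (2*(k:ℝ)+1)) * hss
noncomputable def dualPower (j n : ℕ) (t : ℝ) : ℝ :=
  ∑ i ∈ Finset.Icc j n, Phi i j * (_root_.shiftedLegendre i).eval t

lemma integral_legendre_mul_legendre (a b n : ℕ) (ha : a ≤ n) :
    (∫ t in (0:ℝ)..1, (_root_.shiftedLegendre a).eval t * (_root_.shiftedLegendre b).eval t)
      = ∑ h ∈ range (n+1), (_root_.shiftedLegendre a).coeff h * Mval h b := by
  have hdeg : (_root_.shiftedLegendre a).natDegree < n + 1 :=
    lt_of_le_of_lt (shiftedLegendre_natDegree_le a) (by omega)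
  have expand : ∀ t : ℝ, (_root_.shiftedLegendre a).eval t
      = ∑ h ∈ range (n+1), (_root_.shiftedLegendre a).coeff h * t^h := by
    intro t
    exact Polynomial.eval_eq_sum_range' hdeg t
  have h1 : (∫ t in (0:ℝ)..1, (_root_.shiftedLegendre a).eval t * (_root_.shiftedLegendre b).eval t)
      = ∫ t in (0:ℝ)..1, ∑ h ∈ range (n+1),
          (_root_.shiftedLegendre a).coeff h * (t^h * (_root_.shiftedLegendre b).eval t) := by
    apply intervalIntegral.integral_congr
    intro t _
    dsimp only
    rw [expand t, Finset.sum_mul]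
    apply Finset.sum_congr rfl
    intro h _
    ring
  rw [h1, intervalIntegral.integral_finset_sum]
  · apply Finset.sum_congr rfl
    intro h _
    rw [intervalIntegral.integral_const_mul, ← M_val h b]
  · intro h _
    exact (continuous_const.mul ((continuous_pow h).mul
      (Polynomial.continuous (_root_.shiftedLegendre b)))).intervalIntegrable _ _

/-- The polynomials `d_{j,n}` form the dual basis for the power basis `1, t, …, tⁿ`
w.r.t. the L² inner product on `[0,1]`: `∫_0^1 tⁱ d_{j,n}(t) dt = δ_{i,j}`. -/
theorem dualPower_dual_basis (n : ℕ) :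
    ∀ i ≤ n, ∀ j ≤ n,
      (∫ t in (0:ℝ)..1, t ^ i * dualPower j n t) = if i = j then 1 else 0 := by
  intro i hi j hj
  set Bm : Matrix (Fin (n+1)) (Fin (n+1)) ℝ :=
    fun a b => (_root_.shiftedLegendre (a:ℕ)).coeff (b:ℕ) with hBm
  set Mm : Matrix (Fin (n+1)) (Fin (n+1)) ℝ := fun a b => Mval (a:ℕ) (b:ℕ) with hMm
  set Dm : Matrix (Fin (n+1)) (Fin (n+1)) ℝ :=
    Matrix.diagonal (fun a => 1/(2*((a:ℕ):ℝ)+1)) with hDm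
  set D'm : Matrix (Fin (n+1)) (Fin (n+1)) ℝ :=
    Matrix.diagonal (fun a => 2*((a:ℕ):ℝ)+1) with hD'm
  have hBM : Bm * Mm = Dm := by
    ext a b
    rw [Matrix.mul_apply]
    have : ∑ h : Fin (n+1), Bm a h * Mm h b
        = ∑ h ∈ range (n+1), (_root_.shiftedLegendre (a:ℕ)).coeff h * Mval h (b:ℕ) := by
      rw [Finset.sum_range fun h => (_root_.shiftedLegendre (a:ℕ)).coeff h * Mval h (b:ℕ)]
    rw [this, ← integral_legendre_mul_legendre _ _ n (by omega : (a:ℕ) ≤ n)]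
    by_cases hab : a = b
    · subst hab
      rw [orth_self, hDm, Matrix.diagonal_apply_eq]
    · rw [orth _ _ (fun hh => hab (Fin.ext hh)), hDm,
        Matrix.diagonal_apply_ne _ hab]
  have hDD' : Dm * D'm = 1 := by
    rw [hDm, hD'm, Matrix.diagonal_mul_diagonal]
    rw [show (1 : Matrix (Fin (n+1)) (Fin (n+1)) ℝ) = Matrix.diagonal (fun _ => (1:ℝ)) by
      simp [Matrix.diagonal_one]]
    funext a
    have : (2*((a:ℕ):ℝ)+1) ≠ 0 := by positivity
    field_simp
  have hdetB : IsUnit Bm.det := by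
    have hDdet : Dm.det ≠ 0 := by
      rw [hDm, Matrix.det_diagonal]
      apply Finset.prod_ne_zero_iff.mpr
      intro a _
      positivity
    have : Bm.det * Mm.det ≠ 0 := by rw [← Matrix.det_mul, hBM]; exact hDdet
    exact isUnit_iff_ne_zero.mpr (left_ne_zero_of_mul this)
  have hinv : Invertible Bm := Bm.invertibleOfIsUnitDet hdetB
  have key : Mm * (D'm * Bm) = 1 := by
    have h1 : Bm * (Mm * (D'm * Bm)) = Bm * 1 := by
      rw [mul_one, ← mul_assoc, hBM, ← mul_assoc, hDD', one_mul]
    calc Mm * (D'm * Bm) = ⅟Bm * (Bm * (Mm * (D'm * Bm))) := by rw [invOf_mul_cancel_left]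
      _ = ⅟Bm * (Bm * 1) := by rw [h1]
      _ = 1 := by rw [invOf_mul_cancel_left]
  -- now compute the goal
  have goal1 : (∫ t in (0:ℝ)..1, t ^ i * dualPower j n t)
      = ∑ k ∈ Finset.Icc j n, Phi k j * Mval i k := by
    have h1 : (∫ t in (0:ℝ)..1, t ^ i * dualPower j n t)
        = ∫ t in (0:ℝ)..1, ∑ k ∈ Finset.Icc j n,
            Phi k j * (t^i * (_root_.shiftedLegendre k).eval t) := by
      apply intervalIntegral.integral_congr
      intro t _
      dsimp only
      rw [dualPower, Finset.mul_sum]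
      apply Finset.sum_congr rfl
      intro k _
      ring
    rw [h1, intervalIntegral.integral_finset_sum]
    · apply Finset.sum_congr rfl
      intro k _
      rw [intervalIntegral.integral_const_mul, M_val]
    · intro k _
      exact (continuous_const.mul ((continuous_pow i).mul
        (Polynomial.continuous (_root_.shiftedLegendre k)))).intervalIntegrable _ _
  have goal2 : (∑ k ∈ Finset.Icc j n, Phi k j * Mval i k)
      = ∑ k ∈ range (n+1), Phi k j * Mval i k := by
    apply Finset.sum_subset
    · intro k hk
      rw [Finset.mem_range]
      have := (Finset.mem_Icc.mp hk).2
      omega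
    · intro k hk1 hk2
      have hkj : k < j := by
        rw [Finset.mem_range] at hk1
        rw [Finset.mem_Icc] at hk2
        omega
      rw [Phi_eq, shiftedLegendre_coeff, if_neg (by omega)]
      ring
  have goal3 : (∑ k ∈ range (n+1), Phi k j * Mval i k)
      = (Mm * (D'm * Bm)) ⟨i, by omega⟩ ⟨j, by omega⟩ := by
    rw [Matrix.mul_apply]
    rw [← Fin.sum_univ_eq_sum_range (fun k => Phi k j * Mval i k) (n+1)]
    apply Finset.sum_congr rfl
    intro b _
    rw [Matrix.diagonal_mul]
    show Phi (b:ℕ) j * Mval i (b:ℕ)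
      = Mval i (b:ℕ) * ((2*((b:ℕ):ℝ)+1) * (_root_.shiftedLegendre (b:ℕ)).coeff j)
    rw [Phi_eq]
    ring
  rw [goal1, goal2, goal3, key, Matrix.one_apply]
  simp only [Fin.mk.injEq]
end

section
/- For n ∈ ℕ, j ∈ {0,...,n}, and 0 < t₁ < 1, ∫_0^1 t^j (t - t₁)₊ⁿ dt = ((1-t₁)^{n+1} t₁^j / (n+1)) · ₂F₁(-j, n+1; n+2; (t₁-1)/t₁), where ₂F₁ denotes the terminating hypergeometric sum. -/
open intervalIntegral Finset

/-- Truncated power function `(t - c)₊ⁿ`: equals `(t-c)ⁿ` for `t > c` and `0` otherwise. -/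
noncomputable def truncPow (c : ℝ) (n : ℕ) (t : ℝ) : ℝ :=
  if c < t then (t - c) ^ n else 0

/-- The terminating hypergeometric sum `₂F₁(-s, a; b; x)`. -/
noncomputable def hyp2F1 (s : ℕ) (a b x : ℝ) : ℝ :=
  ∑ k ∈ Finset.range (s + 1),
    ((ascPochhammer ℝ k).eval (-(s : ℝ)) * (ascPochhammer ℝ k).eval a) /
      ((ascPochhammer ℝ k).eval b * (Nat.factorial k : ℝ)) * x ^ k

private lemma truncPow_moment_int (n j : ℕ) (t₁ : ℝ) (h0 : 0 < t₁) (h1 : t₁ < 1) :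
    (∫ t in (0:ℝ)..1, t ^ j * truncPow t₁ n t)
      = ∑ k ∈ range (j+1),
          (j.choose k : ℝ) * t₁^(j-k) * ((1-t₁)^(n+k+1)/((n:ℝ)+k+1)) := by
  have h01 : t₁ ≤ 1 := h1.le
  have hcont : Continuous (fun t : ℝ => t ^ j * (t - t₁) ^ n) := by continuity
  have hi1 : IntervalIntegrable (fun t => t ^ j * truncPow t₁ n t) MeasureTheory.volume 0 t₁ := by
    rw [intervalIntegrable_iff]
    apply MeasureTheory.integrableOn_zero.congr_fun _ measurableSet_uIoc
    intro t ht
    rw [Set.uIoc_of_le h0.le] at ht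
    simp [truncPow, not_lt.2 ht.2]
  have hi2 : IntervalIntegrable (fun t => t ^ j * truncPow t₁ n t) MeasureTheory.volume t₁ 1 := by
    rw [intervalIntegrable_iff]
    have := (hcont.intervalIntegrable (μ := MeasureTheory.volume) t₁ 1)
    rw [intervalIntegrable_iff] at this
    apply this.congr_fun _ measurableSet_uIoc
    intro t ht
    rw [Set.uIoc_of_le h01] at ht
    simp [truncPow, ht.1]
  have hzero : (∫ t in (0:ℝ)..t₁, t ^ j * truncPow t₁ n t) = 0 := by
    have h := intervalIntegral.integral_congr (μ := MeasureTheory.volume)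
      (a := (0:ℝ)) (b := t₁) (f := fun t => t ^ j * truncPow t₁ n t) (g := fun _ => (0:ℝ)) ?_
    · simpa using h
    · intro t ht
      rw [Set.uIcc_of_le h0.le] at ht
      simp [truncPow, not_lt.2 ht.2]
  have hmain : (∫ t in t₁..(1:ℝ), t ^ j * truncPow t₁ n t)
      = ∫ t in t₁..(1:ℝ), t ^ j * (t - t₁) ^ n := by
    apply intervalIntegral.integral_congr_ae
    filter_upwards with t ht
    rw [Set.uIoc_of_le h01] at ht
    simp [truncPow, ht.1]
  rw [← intervalIntegral.integral_add_adjacent_intervals hi1 hi2, hzero, zero_add, hmain]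
  have hexp : ∀ t : ℝ, t ^ j * (t - t₁) ^ n
      = ∑ k ∈ range (j+1), (j.choose k : ℝ) * t₁^(j-k) * (t - t₁)^(n+k) := by
    intro t
    have h := add_pow (t - t₁) t₁ j
    rw [sub_add_cancel] at h
    rw [h, Finset.sum_mul]
    refine Finset.sum_congr rfl fun k _ => ?_
    rw [pow_add]; ring
  rw [intervalIntegral.integral_congr (fun t _ => hexp t),
    intervalIntegral.integral_finset_sum]
  · refine Finset.sum_congr rfl fun k _ => ?_
    rw [intervalIntegral.integral_const_mul,
      intervalIntegral.integral_comp_sub_right (fun x => x ^ (n+k)) t₁, integral_pow]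
    push_cast
    simp [sub_self]
  · intro k _
    exact (Continuous.intervalIntegrable (by continuity) _ _)

private lemma truncPow_moment_hyp (n j : ℕ) (t₁ : ℝ) (h0 : 0 < t₁) (h1 : t₁ < 1) :
    (1 - t₁) ^ (n + 1) * t₁ ^ j / ((n : ℝ) + 1) *
          hyp2F1 j ((n : ℝ) + 1) ((n : ℝ) + 2) ((t₁ - 1) / t₁)
      = ∑ k ∈ range (j+1),
          (j.choose k : ℝ) * t₁^(j-k) * ((1-t₁)^(n+k+1)/((n:ℝ)+k+1)) := by
  have ht : t₁ ≠ 0 := h0.ne'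
  rw [hyp2F1, Finset.mul_sum]
  refine Finset.sum_congr rfl fun k hk => ?_
  have hkj : k ≤ j := Nat.lt_succ_iff.mp (Finset.mem_range.mp hk)
  have hA : (ascPochhammer ℝ k).eval ((n:ℝ)+1) = ((n+1).ascFactorial k : ℝ) := by
    rw [show (n:ℝ)+1 = ((n+1:ℕ):ℝ) by push_cast; ring, ← ascPochhammer_eval_cast,
      ascPochhammer_nat_eq_ascFactorial]
  have hB : (ascPochhammer ℝ k).eval ((n:ℝ)+2) = ((n+2).ascFactorial k : ℝ) := by
    rw [show (n:ℝ)+2 = ((n+2:ℕ):ℝ) by push_cast; ring, ← ascPochhammer_eval_cast,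
      ascPochhammer_nat_eq_ascFactorial]
  have hD : (ascPochhammer ℝ k).eval (-(j:ℝ)) = (-1)^k * (j.descFactorial k : ℝ) := by
    rw [ascPochhammer_eval_neg_eq_descPochhammer, descPochhammer_eval_eq_descFactorial]
  have hchoose : (j.descFactorial k : ℝ) = (k.factorial : ℝ) * (j.choose k : ℝ) := by
    rw_mod_cast [Nat.descFactorial_eq_factorial_mul_choose]
  have h1 : ((-1:ℝ))^k * (-1)^k = 1 := by rw [← mul_pow]; norm_num
  have hDx : (ascPochhammer ℝ k).eval (-(j:ℝ)) * ((t₁ - 1) / t₁) ^ k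
      = (k.factorial : ℝ) * (j.choose k : ℝ) * ((1 - t₁) ^ k / t₁ ^ k) := by
    have h2 : (t₁ - 1)^k = (-1:ℝ)^k * (1-t₁)^k := by
      rw [show (t₁ - 1 : ℝ) = -(1-t₁) by ring, neg_pow]
    rw [hD, hchoose, div_pow]
    field_simp
    linear_combination ((j.choose k : ℝ) * (-1:ℝ)^k) * h2 + ((j.choose k : ℝ) * (1-t₁)^k) * h1
  have hnat : (n + 1) * (n + 2).ascFactorial k = (n + k + 1) * (n + 1).ascFactorial k := by
    apply Nat.eq_of_mul_eq_mul_left (Nat.factorial_pos n)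
    calc n.factorial * ((n + 1) * (n + 2).ascFactorial k)
        = (n+1).factorial * (n+2).ascFactorial k := by rw [Nat.factorial_succ]; ring
      _ = Nat.factorial (n+1+k) := Nat.factorial_mul_ascFactorial (n+1) k
      _ = (n + k + 1) * Nat.factorial (n+k) := by
          rw [show n+1+k = n+k+1 by ring, Nat.factorial_succ]
      _ = n.factorial * ((n + k + 1) * (n + 1).ascFactorial k) := by
          rw [← Nat.factorial_mul_ascFactorial n k]; ring
  have hBr : ((n:ℝ) + 1) * ((n+2).ascFactorial k : ℝ)
      = ((n:ℝ) + (k:ℝ) + 1) * ((n+1).ascFactorial k : ℝ) := by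
    have := congrArg (Nat.cast : ℕ → ℝ) hnat
    push_cast at this
    linear_combination this
  have hAne : ((n+1).ascFactorial k : ℝ) ≠ 0 := by
    exact_mod_cast (Nat.ascFactorial_pos n k).ne'
  have hkfne : (k.factorial : ℝ) ≠ 0 := by exact_mod_cast k.factorial_ne_zero
  have hn1 : ((n:ℝ)+1) ≠ 0 := by positivity
  have hnk1 : ((n:ℝ)+(k:ℝ)+1) ≠ 0 := by positivity
  have hre : (ascPochhammer ℝ k).eval (-(j:ℝ)) * (ascPochhammer ℝ k).eval ((n:ℝ)+1) /
        ((ascPochhammer ℝ k).eval ((n:ℝ)+2) * (k.factorial : ℝ)) * ((t₁ - 1) / t₁) ^ k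
      = ((ascPochhammer ℝ k).eval (-(j:ℝ)) * ((t₁ - 1) / t₁) ^ k) *
          (ascPochhammer ℝ k).eval ((n:ℝ)+1) /
          ((ascPochhammer ℝ k).eval ((n:ℝ)+2) * (k.factorial : ℝ)) := by ring
  rw [hre, hDx, hA, hB]
  have htj : t₁ ^ j = t₁^(j-k) * t₁^k := by rw [← pow_add, Nat.sub_add_cancel hkj]
  rw [htj]
  have htk : (t₁:ℝ)^k ≠ 0 := pow_ne_zero _ ht
  have hBne : ((n+2).ascFactorial k : ℝ) ≠ 0 := by
    exact_mod_cast (Nat.ascFactorial_pos (n+1) k).ne'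
  set A := ((n+1).ascFactorial k : ℝ) with hAdef
  set B := ((n+2).ascFactorial k : ℝ) with hBdef
  set F := (k.factorial : ℝ) with hFdef
  set C := (j.choose k : ℝ) with hCdef
  field_simp
  linear_combination (-(C * (1-t₁)^(n+k+1))) * hBr

/-- `∫_0^1 tʲ (t-t₁)₊ⁿ dt = ((1-t₁)^{n+1} t₁ʲ/(n+1)) ₂F₁(-j, n+1; n+2; (t₁-1)/t₁)`. -/
theorem truncPow_moment (n j : ℕ) (hj : j ≤ n) (t₁ : ℝ) (h0 : 0 < t₁) (h1 : t₁ < 1) :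
    (∫ t in (0:ℝ)..1, t ^ j * truncPow t₁ n t)
      = (1 - t₁) ^ (n + 1) * t₁ ^ j / ((n : ℝ) + 1) *
          hyp2F1 j ((n : ℝ) + 1) ((n : ℝ) + 2) ((t₁ - 1) / t₁) := by
  rw [truncPow_moment_int n j t₁ h0 h1, truncPow_moment_hyp n j t₁ h0 h1]
end

section
/- For n ∈ ℕ and 0 < t_j < t_i < 1, ∫_0^1 (t - t_j)₊ⁿ (t - t_i)₊ⁿ dt = ((1-t_i)^{2n+1}/(2n+1)) · ₂F₁(-n, -2n-1; -2n; (t_i - t_j)/(t_i - 1)). -/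
open intervalIntegral Finset

lemma asc_eval_prod (x : ℝ) (k : ℕ) :
    (ascPochhammer ℝ k).eval x = ∏ i ∈ range k, (x + i) := by
  induction k with
  | zero => simp
  | succ k ih => rw [ascPochhammer_succ_eval, ih, prod_range_succ]

lemma prod_shift_aux (x : ℝ) (k : ℕ) :
    (x - 1) * ∏ i ∈ range k, (x + i) = (∏ i ∈ range k, (x - 1 + i)) * (x + k - 1) := by
  induction k with
  | zero => simp
  | succ k ih =>
    rw [prod_range_succ, prod_range_succ, ← mul_assoc, ih]
    push_cast
    ring

lemma prod_neg_aux (n : ℕ) : ∀ k, k ≤ n →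
    ∏ i ∈ range k, (-(n:ℝ) + i) = (-1)^k * (n.descFactorial k : ℝ) := by
  intro k
  induction k with
  | zero => simp
  | succ k ih =>
    intro hk
    have hk' : k ≤ n := (Nat.lt_of_succ_le hk).le
    rw [prod_range_succ, ih hk', Nat.descFactorial_succ]
    have : ((n - k : ℕ) : ℝ) = (n : ℝ) - k := by push_cast [hk']; ring
    push_cast [this]
    ring

/-- `∫_0^1 (t-t_j)₊ⁿ (t-t_i)₊ⁿ dt = ((1-t_i)^{2n+1}/(2n+1)) ₂F₁(-n, -2n-1; -2n; (t_i-t_j)/(t_i-1))`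
for `0 < t_j < t_i < 1`. -/
theorem truncPow_inner_product (n : ℕ) (tj ti : ℝ)
    (h0 : 0 < tj) (hji : tj < ti) (h1 : ti < 1) :
    (∫ t in (0:ℝ)..1, truncPow tj n t * truncPow ti n t)
      = (1 - ti) ^ (2 * n + 1) / (2 * (n : ℝ) + 1) *
          hyp2F1 n (-2 * (n : ℝ) - 1) (-2 * (n : ℝ)) ((ti - tj) / (ti - 1)) := by
  have step1 : (∫ t in (0:ℝ)..1, truncPow tj n t * truncPow ti n t)
      = ∑ k ∈ range (n+1), (n.choose k : ℝ) * (ti - tj)^(n-k) * ((1-ti)^(n+k+1)/(n+k+1)) := by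
    have hf : (fun t => truncPow tj n t * truncPow ti n t)
        = Set.indicator (Set.Ioi ti) (fun t => (t - tj)^n * (t - ti)^n) := by
      funext t
      simp only [truncPow, Set.indicator, Set.mem_Ioi]
      by_cases h : ti < t
      · rw [if_pos h, if_pos h, if_pos (lt_trans hji h)]
      · rw [if_neg h, if_neg h, mul_zero]
    have h01 : (0:ℝ) ≤ 1 := by norm_num
    rw [intervalIntegral.integral_of_le h01]
    simp_rw [show (fun t => truncPow tj n t * truncPow ti n t)
      = Set.indicator (Set.Ioi ti) (fun t => (t - tj)^n * (t - ti)^n) from hf]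
    rw [MeasureTheory.setIntegral_indicator measurableSet_Ioi]
    have hset : Set.Ioc (0:ℝ) 1 ∩ Set.Ioi ti = Set.Ioc ti 1 := by
      ext t
      simp only [Set.mem_inter_iff, Set.mem_Ioc, Set.mem_Ioi]
      constructor
      · rintro ⟨⟨_, h2⟩, h3⟩; exact ⟨h3, h2⟩
      · rintro ⟨h3, h2⟩; exact ⟨⟨lt_trans (lt_trans h0 hji) h3, h2⟩, h3⟩
    rw [hset, ← intervalIntegral.integral_of_le h1.le]
    have hbin : ∀ t : ℝ, (t - tj)^n * (t - ti)^n
        = ∑ k ∈ range (n+1), ((n.choose k : ℝ) * (ti - tj)^(n-k)) * (t - ti)^(n+k) := by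
      intro t
      have ht : (t - tj) = (t - ti) + (ti - tj) := by ring
      rw [ht, add_pow, Finset.sum_mul]
      refine Finset.sum_congr rfl fun k hk => ?_
      rw [pow_add]; ring
    simp_rw [hbin]
    rw [intervalIntegral.integral_finset_sum]
    · refine Finset.sum_congr rfl fun k hk => ?_
      rw [intervalIntegral.integral_const_mul,
        intervalIntegral.integral_comp_sub_right (fun u => u ^ (n+k)) ti, sub_self,
        integral_pow]
      push_cast
      ring_nf
    · intro k hk
      exact (Continuous.intervalIntegrable (by continuity) _ _)
  rw [step1]
  have hA : (1 : ℝ) - ti ≠ 0 := by linarith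
  rw [hyp2F1, Finset.mul_sum, ← Finset.sum_range_reflect]
  refine Finset.sum_congr rfl fun k hk => ?_
  rw [Finset.mem_range, Nat.lt_succ_iff] at hk
  have e1 : n - (n - k) = k := Nat.sub_sub_self hk
  have e2 : n + (n - k) + 1 = 2*n + 1 - k := by omega
  simp only [Nat.add_sub_cancel]
  rw [Nat.choose_symm hk, e1, e2]
  have ec : ((2*n+1-k : ℕ):ℝ) = 2*(n:ℝ)+1-k := by
    rw [Nat.cast_sub (by omega : k ≤ 2*n+1)]; push_cast; ring
  have ec2 : ((n:ℝ) + ↑(n-k) + 1) = 2*(n:ℝ)+1-k := by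
    rw [Nat.cast_sub hk]; ring
  rw [ec2, asc_eval_prod, asc_eval_prod, asc_eval_prod]
  set Pb := ∏ i ∈ range k, (-2*(n:ℝ) + i) with hPbdef
  have hPb : Pb ≠ 0 := by
    rw [hPbdef]
    refine Finset.prod_ne_zero_iff.mpr fun i hi => ?_
    rw [Finset.mem_range] at hi
    have h2 : (i:ℝ) < 2*n := by
      have : i < 2*n := by omega
      exact_mod_cast this
    linarith
  have hdk : 2*(n:ℝ)+1-k ≠ 0 := by
    have : (k:ℝ) ≤ n := by exact_mod_cast hk
    have hn : (0:ℝ) ≤ n := Nat.cast_nonneg n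
    linarith
  have hPa : ∏ i ∈ range k, (-2*(n:ℝ) - 1 + i) = (2*(n:ℝ)+1) * Pb / (2*(n:ℝ)+1-k) := by
    have hs := prod_shift_aux (-2*(n:ℝ)) k
    rw [← hPbdef] at hs
    rw [eq_div_iff hdk]
    linear_combination hs
  have hP1 : ∏ i ∈ range k, (-(n:ℝ) + i) = (-1)^k * (n.descFactorial k : ℝ) :=
    prod_neg_aux n k hk
  rw [hP1, hPa]
  have hD : (n.descFactorial k : ℝ) = (k.factorial : ℝ) * (n.choose k : ℝ) := by
    rw [Nat.descFactorial_eq_factorial_mul_choose]; push_cast; ring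
  rw [hD]
  have hkf : (k.factorial : ℝ) ≠ 0 := by exact_mod_cast k.factorial_ne_zero
  have h2n1 : (2*(n:ℝ)+1) ≠ 0 := by positivity
  have hti1 : ti - 1 ≠ 0 := by linarith
  have hp : (1-ti)^(2*n+1) = (1-ti)^(2*n+1-k) * (1-ti)^k := by
    rw [← pow_add]; congr 1; omega
  have hsign : (-1:ℝ)^k * (ti-1)^k = (1-ti)^k := by
    rw [← mul_pow]; ring_nf
  rw [hp]
  rw [div_pow]
  have hm1 : ((-1:ℝ))^k * (-1)^k = 1 := by
    rw [← mul_pow]; norm_num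
  field_simp
  have hsign2 : (-1:ℝ)^k * (1-ti)^k = (ti-1)^k := by rw [← mul_pow]; ring_nf
  linear_combination
    ((n.choose k : ℝ) * (ti - tj)^k * (1-ti)^(2*n+1-k) * (2*(n:ℝ)+1) * (2*(n:ℝ)+1-k)
        * Pb * (k.factorial : ℝ) * (-1)^k) * hsign +
    (-((n.choose k : ℝ) * (ti - tj)^k * (1-ti)^(2*n+1-k) * (2*(n:ℝ)+1) * (2*(n:ℝ)+1-k)
        * Pb * (k.factorial : ℝ)) * (ti-1)^k) * hm1 +
    (-((n.choose k : ℝ) * (ti - tj)^k * (1 - Pb * (k.factorial : ℝ) * (1-ti)^(2*n+1-k)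
        * (2*(n:ℝ)+1) * (2*(n:ℝ)+1-k)))) *
      hsign2
end

section
/- Fix n ≥ 2 and 0 < t_i < 1, and set a := (1-t_i)/t_i and v_j := ∫_0^1 t^j (t - t_i)₊ⁿ dt. Then v_0 = (1-t_i)^{n+1}/(n+1), v_1 = t_i v_0 + (1-t_i)^{n+2}/(n+2), and for 2 ≤ j ≤ n, v_j = (((a+2)j + n(a+1)) t_i / (n+j+1)) · v_{j-1} − ((a+1)(j-1) t_i² / (n+j+1)) · v_{j-2}. -/
set_option maxHeartbeats 1000000

open intervalIntegral

/-- Recurrence for the moments `v_j = ∫_0^1 tʲ (t - t_i)₊ⁿ dt` (`n ≥ 2`, `0 < t_i < 1`),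
with `a = (1 - t_i)/t_i`:
`v_0 = (1-t_i)^{n+1}/(n+1)`, `v_1 = t_i v_0 + (1-t_i)^{n+2}/(n+2)`, and for `2 ≤ j ≤ n`,
`v_j = (((a+2)j + n(a+1)) t_i/(n+j+1)) v_{j-1} − ((a+1)(j-1) t_i²/(n+j+1)) v_{j-2}`. -/
theorem truncPow_moment_recurrence (n : ℕ) (hn : 2 ≤ n) (ti : ℝ) (h0 : 0 < ti) (h1 : ti < 1) :
    let a : ℝ := (1 - ti) / ti
    let v : ℕ → ℝ := fun j => ∫ t in (0:ℝ)..1, t ^ j * truncPow ti n t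
    v 0 = (1 - ti) ^ (n + 1) / ((n : ℝ) + 1) ∧
    v 1 = ti * v 0 + (1 - ti) ^ (n + 2) / ((n : ℝ) + 2) ∧
    (∀ j : ℕ, 2 ≤ j → j ≤ n →
      v j = ((a + 2) * (j : ℝ) + (n : ℝ) * (a + 1)) * ti / ((n : ℝ) + (j : ℝ) + 1) * v (j - 1)
          - (a + 1) * ((j : ℝ) - 1) * ti ^ 2 / ((n : ℝ) + (j : ℝ) + 1) * v (j - 2)) := by
  intro a v
  have hne : n ≠ 0 := by omega
  set M : ℕ → ℝ := fun j => ∫ t in ti..(1:ℝ), t ^ j * (t - ti) ^ n with hMdef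
  have htp : truncPow ti n = fun t => max (t - ti) 0 ^ n := by
    funext t
    by_cases h : ti < t
    · simp [truncPow, h, max_eq_left (by linarith : (0:ℝ) ≤ t - ti)]
    · simp [truncPow, h, max_eq_right (by linarith [not_lt.1 h] : t - ti ≤ 0), zero_pow hne]
  have hcont : Continuous (truncPow ti n) := by
    rw [htp]; exact ((continuous_id.sub continuous_const).max continuous_const).pow n
  have hvM : ∀ j, v j = M j := by
    intro j
    have hint : ∀ (x y : ℝ),
        IntervalIntegrable (fun t => t ^ j * truncPow ti n t) MeasureTheory.volume x y :=
      fun x y => ((continuous_pow j).mul hcont).intervalIntegrable x y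
    have hsplit : v j = (∫ t in (0:ℝ)..ti, t ^ j * truncPow ti n t)
        + ∫ t in ti..(1:ℝ), t ^ j * truncPow ti n t :=
      (integral_add_adjacent_intervals (hint 0 ti) (hint ti 1)).symm
    have h2 : (∫ t in (0:ℝ)..ti, t ^ j * truncPow ti n t) = 0 := by
      have heq : Set.EqOn (fun t => t ^ j * truncPow ti n t) (fun _ => (0:ℝ)) (Set.uIcc 0 ti) := by
        intro t ht
        rw [Set.uIcc_of_le h0.le] at ht
        simp [truncPow, not_lt.2 ht.2]
      rw [integral_congr heq]; simp
    have h3 : (∫ t in ti..(1:ℝ), t ^ j * truncPow ti n t) = M j := by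
      apply integral_congr
      intro t ht
      rw [Set.uIcc_of_le h1.le] at ht
      by_cases h : ti < t
      · simp [truncPow, h]
      · have : t = ti := le_antisymm (not_lt.1 h) ht.1
        simp [truncPow, this, zero_pow hne]
    rw [hsplit, h2, h3, zero_add]
  have key : ∀ k : ℕ, ((n:ℝ) + k + 2) * M (k+1) = ((k:ℝ)+1) * ti * M k + (1 - ti)^(n+1) := by
    intro k
    set g : ℝ → ℝ := fun t =>
      ((k:ℝ)+1) * t ^ k * (t - ti)^(n+1) + t^(k+1) * (((n:ℝ)+1) * (t - ti)^n) with hg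
    have hderiv : ∀ t ∈ Set.uIcc ti (1:ℝ),
        HasDerivAt (fun t : ℝ => t ^ (k+1) * (t - ti) ^ (n+1)) (g t) t := by
      intro t _
      have h1' : HasDerivAt (fun t : ℝ => t ^ (k+1)) (((k:ℝ)+1) * t ^ k) t := by
        simpa using hasDerivAt_pow (k+1) t
      have h2' : HasDerivAt (fun t : ℝ => (t - ti) ^ (n+1)) (((n:ℝ)+1) * (t - ti)^n) t := by
        have := ((hasDerivAt_id t).sub_const ti).pow (n+1)
        simpa [Pi.pow_def] using this
      simpa [hg, Pi.mul_def] using h1'.mul h2'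
    have hc1 : Continuous fun t : ℝ => t^(k+1)*(t-ti)^n :=
      (continuous_pow (k+1)).mul ((continuous_id.sub continuous_const).pow n)
    have hc2 : Continuous fun t : ℝ => t^k*(t-ti)^n :=
      (continuous_pow k).mul ((continuous_id.sub continuous_const).pow n)
    have hgc : Continuous g := by
      rw [hg]
      exact ((continuous_const.mul (continuous_pow k)).mul
          ((continuous_id.sub continuous_const).pow (n+1))).add
        ((continuous_pow (k+1)).mul (continuous_const.mul
          ((continuous_id.sub continuous_const).pow n)))
    have hftc : ∫ t in ti..(1:ℝ), g t
        = 1^(k+1) * ((1:ℝ)-ti)^(n+1) - ti^(k+1) * (ti-ti)^(n+1) :=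
      integral_eq_sub_of_hasDerivAt hderiv (hgc.intervalIntegrable ti 1)
    have hgeq : ∀ t : ℝ, g t = ((n:ℝ)+k+2) * (t^(k+1)*(t-ti)^n) - ((k:ℝ)+1)*ti*(t^k*(t-ti)^n) := by
      intro t; simp only [hg, pow_succ]; ring
    have hsplit : ∫ t in ti..(1:ℝ), g t = ((n:ℝ)+k+2) * M (k+1) - ((k:ℝ)+1)*ti * M k := by
      simp_rw [hgeq]
      rw [intervalIntegral.integral_sub, integral_const_mul, integral_const_mul]
      · exact (continuous_const.mul hc1).intervalIntegrable ti 1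
      · exact ((continuous_const.mul continuous_const).mul hc2).intervalIntegrable ti 1
    rw [hsplit] at hftc
    simp only [one_pow, sub_self, zero_pow (Nat.succ_ne_zero n), mul_zero, sub_zero, one_mul] at hftc
    linarith
  have hM0 : M 0 = (1-ti)^(n+1) / ((n:ℝ)+1) := by
    have h1' : M 0 = ∫ t in ti..(1:ℝ), (t - ti)^n := by simp [hMdef]
    rw [h1', show (fun t : ℝ => (t - ti)^n) = fun t => (fun x : ℝ => x ^ n) (t - ti) from rfl,
      intervalIntegral.integral_comp_sub_right (fun x : ℝ => x ^ n) ti]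
    rw [sub_self, integral_pow]
    simp [zero_pow (Nat.succ_ne_zero n)]
  set Q : ℝ := (1 - ti)^(n+1) with hQ
  have hn1 : ((n:ℝ)+1) ≠ 0 := by positivity
  have hn2 : ((n:ℝ)+2) ≠ 0 := by positivity
  have hti : ti ≠ 0 := h0.ne'
  refine ⟨by rw [hvM]; exact hM0, ?_, ?_⟩
  · have hk0 := key 0
    push_cast at hk0
    rw [hvM, hvM]
    rw [show n + 2 = (n+1)+1 from rfl, pow_succ, ← hQ]
    have hM1 : M 1 = (ti * M 0 + Q) / ((n:ℝ)+2) := by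
      field_simp
      linarith [hk0]
    rw [hM1, hM0]
    field_simp
    ring
  · intro j hj2 hjn
    obtain ⟨k, rfl⟩ : ∃ k, j = k + 2 := ⟨j - 2, by omega⟩
    have hkey1 := key (k+1)
    have hkey2 := key k
    push_cast at hkey1 hkey2
    have e1 : k + 2 - 1 = k + 1 := rfl
    have e2 : k + 2 - 2 = k := rfl
    rw [e1, e2, hvM, hvM, hvM]
    have hN : ((n:ℝ) + (k:ℝ) + 3) ≠ 0 := by positivity
    have hval : M (k+2) = (((k:ℝ)+2) * ti * M (k+1) + Q) / ((n:ℝ)+(k:ℝ)+3) := by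
      field_simp
      linarith [hkey1]
    have hQ2 : Q = ((n:ℝ)+(k:ℝ)+2) * M (k+1) - ((k:ℝ)+1)*ti*M k := by linarith [hkey2]
    rw [hval, hQ2]
    simp only [a]
    push_cast
    field_simp
    ring
end

section
/- (Marsden's identity) For the degree-n B-spline basis N_{-n+j,n}, j = 0,...,n+m, over a clamped knot vector T_m on [0,1], and any y ∈ ℝ, (y - t)ⁿ = Σ_{j=0}^{n+m} Π_{r=1}^{n} (y - t_{-n+j+r}) · N_{-n+j,n}(t) for all t ∈ [0,1). -/
open Finset

/-- Normalized B-spline functions of degree `n` over the knot sequence `T` (index-shifted so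
that `N_{i,n}` uses knots `T i, …, T (i+n+1)`), via the Cox–de Boor recursion with the
convention `0/0 = 0` (division by zero is zero in `ℝ`). -/
noncomputable def bspl (T : ℕ → ℝ) : ℕ → ℕ → ℝ → ℝ
  | 0, i, x => if T i ≤ x ∧ x < T (i + 1) then 1 else 0
  | n + 1, i, x =>
      (x - T i) / (T (i + n + 1) - T i) * bspl T n i x
        + (T (i + n + 2) - x) / (T (i + n + 2) - T (i + 1)) * bspl T n (i + 1) x

lemma bspl_zero_left (T : ℕ → ℝ) (hmono : Monotone T) :
    ∀ (d i : ℕ) (t : ℝ), t < T i → bspl T d i t = 0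
  | 0, i, t, h => by
    rw [bspl, if_neg]; rintro ⟨h1, _⟩; linarith
  | d + 1, i, t, h => by
    rw [bspl, bspl_zero_left T hmono d i t h,
      bspl_zero_left T hmono d (i + 1) t (lt_of_lt_of_le h (hmono (Nat.le_succ i)))]
    ring

lemma bspl_zero_right (T : ℕ → ℝ) (hmono : Monotone T) :
    ∀ (d i : ℕ) (t : ℝ), T (i + d + 1) ≤ t → bspl T d i t = 0
  | 0, i, t, h => by
    rw [bspl, if_neg]; rintro ⟨_, h2⟩
    exact absurd (lt_of_lt_of_le h2 (by simpa using h)) (lt_irrefl t)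
  | d + 1, i, t, h => by
    have h1 : T (i + d + 1) ≤ t := le_trans (hmono (by omega)) h
    have h2 : T ((i + 1) + d + 1) ≤ t := le_trans (hmono (by omega)) h
    rw [bspl, bspl_zero_right T hmono d i t h1, bspl_zero_right T hmono d (i + 1) t h2]
    ring

lemma bspl_support (T : ℕ → ℝ) (hmono : Monotone T) (d i : ℕ) (t : ℝ)
    (h : bspl T d i t ≠ 0) : T i ≤ t ∧ t < T (i + d + 1) := by
  constructor
  · by_contra hc; exact h (bspl_zero_left T hmono d i t (lt_of_not_ge hc))
  · by_contra hc; exact h (bspl_zero_right T hmono d i t (le_of_not_gt hc))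

lemma sum_Icc_shift (a b : ℕ) (g : ℕ → ℝ) :
    ∑ j ∈ Icc a b, g (j + 1) = ∑ j ∈ Icc (a + 1) (b + 1), g j := by
  rw [← Finset.map_add_right_Icc a b 1, Finset.sum_map]
  rfl

lemma prod_Icc_shift (f : ℕ → ℝ) (d : ℕ) :
    ∏ r ∈ Icc 1 (d + 1), f r = f 1 * ∏ r ∈ Icc 1 d, f (r + 1) := by
  induction d with
  | zero => simp
  | succ d ih =>
    rw [Finset.prod_Icc_succ_top (by omega : 1 ≤ d + 1 + 1), ih,
      Finset.prod_Icc_succ_top (by omega : 1 ≤ d + 1)]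
    ring

lemma marsden_local (T : ℕ → ℝ) (hmono : Monotone T) (y t : ℝ) :
    ∀ (d k : ℕ), d ≤ k → T k ≤ t → t < T (k + 1) →
      ∑ j ∈ Icc (k - d) k, (∏ r ∈ Icc 1 d, (y - T (j + r))) * bspl T d j t
        = (y - t) ^ d := by
  intro d
  induction d with
  | zero =>
    intro k _ h1 h2
    rw [Nat.sub_zero, Finset.Icc_self, Finset.sum_singleton]
    rw [show bspl T 0 k t = if T k ≤ t ∧ t < T (k + 1) then 1 else 0 from rfl,
      if_pos ⟨h1, h2⟩]
    simp
  | succ d ih =>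
    intro k hk h1 h2
    have hdk : d ≤ k := by omega
    set a := k - (d + 1) with ha
    have haa : a + 1 = k - d := by omega
    have hadd : a + d + 1 = k := by omega
    -- expand the recursion and split the sum
    have hsplit :
        ∑ j ∈ Icc a k, (∏ r ∈ Icc 1 (d + 1), (y - T (j + r))) * bspl T (d + 1) j t
          = (∑ j ∈ Icc a k, (∏ r ∈ Icc 1 (d + 1), (y - T (j + r))) *
                ((t - T j) / (T (j + d + 1) - T j)) * bspl T d j t)
            + ∑ j ∈ Icc a k, (fun i => (∏ r ∈ Icc 1 (d + 1), (y - T (i + r))) *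
                ((T (i + d + 2) - t) / (T (i + d + 2) - T (i + 1)))
                  * bspl T d (i + 1) t) j := by
      rw [← Finset.sum_add_distrib]
      refine Finset.sum_congr rfl fun j _ => ?_
      show _ = _
      rw [show bspl T (d + 1) j t
          = (t - T j) / (T (j + d + 1) - T j) * bspl T d j t
            + (T (j + d + 2) - t) / (T (j + d + 2) - T (j + 1)) * bspl T d (j + 1) t from rfl]
      ring
    rw [hsplit]
    -- reindex the second sum
    have hre : ∑ j ∈ Icc a k, (fun i => (∏ r ∈ Icc 1 (d + 1), (y - T (i + r))) *
            ((T (i + d + 2) - t) / (T (i + d + 2) - T (i + 1))) * bspl T d (i + 1) t) j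
        = ∑ j ∈ Icc (a + 1) (k + 1),
            (∏ r ∈ Icc 1 (d + 1), (y - T (j - 1 + r))) *
              ((T (j - 1 + d + 2) - t) / (T (j - 1 + d + 2) - T (j - 1 + 1)))
                * bspl T d (j - 1 + 1) t := by
      rw [← sum_Icc_shift a k (fun j => (∏ r ∈ Icc 1 (d + 1), (y - T (j - 1 + r))) *
          ((T (j - 1 + d + 2) - t) / (T (j - 1 + d + 2) - T (j - 1 + 1)))
            * bspl T d (j - 1 + 1) t)]
      refine Finset.sum_congr rfl fun j _ => ?_
      simp only [Nat.add_sub_cancel]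
    rw [hre]
    -- turn the first sum into a sum over Icc (a+1) (k+1)
    have hext1 :
        ∑ j ∈ Icc a k, (∏ r ∈ Icc 1 (d + 1), (y - T (j + r))) *
            ((t - T j) / (T (j + d + 1) - T j)) * bspl T d j t
          = ∑ j ∈ Icc (a + 1) (k + 1), (∏ r ∈ Icc 1 (d + 1), (y - T (j + r))) *
              ((t - T j) / (T (j + d + 1) - T j)) * bspl T d j t := by
      have e1 :
          ∑ j ∈ Icc a k, (∏ r ∈ Icc 1 (d + 1), (y - T (j + r))) *
              ((t - T j) / (T (j + d + 1) - T j)) * bspl T d j t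
            = ∑ j ∈ Icc a (k + 1), (∏ r ∈ Icc 1 (d + 1), (y - T (j + r))) *
                ((t - T j) / (T (j + d + 1) - T j)) * bspl T d j t := by
        refine Finset.sum_subset (Finset.Icc_subset_Icc_right (by omega)) fun x hx hnx => ?_
        simp only [Finset.mem_Icc] at hx hnx
        have hxk : x = k + 1 := by omega
        rw [hxk, bspl_zero_left T hmono d (k + 1) t h2]
        ring
      have e2 :
          ∑ j ∈ Icc (a + 1) (k + 1), (∏ r ∈ Icc 1 (d + 1), (y - T (j + r))) *
              ((t - T j) / (T (j + d + 1) - T j)) * bspl T d j t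
            = ∑ j ∈ Icc a (k + 1), (∏ r ∈ Icc 1 (d + 1), (y - T (j + r))) *
                ((t - T j) / (T (j + d + 1) - T j)) * bspl T d j t := by
        refine Finset.sum_subset (Finset.Icc_subset_Icc_left (by omega)) fun x hx hnx => ?_
        simp only [Finset.mem_Icc] at hx hnx
        have hxa : x = a := by omega
        have hz : T (x + d + 1) ≤ t := by rw [hxa, hadd]; exact h1
        rw [bspl_zero_right T hmono d x t hz]
        ring
      rw [e1, ← e2]
    rw [hext1, ← Finset.sum_add_distrib]
    -- pointwise identity on Icc (a+1) (k+1)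
    have hpt : ∀ j ∈ Icc (a + 1) (k + 1),
        (∏ r ∈ Icc 1 (d + 1), (y - T (j + r))) *
            ((t - T j) / (T (j + d + 1) - T j)) * bspl T d j t
          + (∏ r ∈ Icc 1 (d + 1), (y - T (j - 1 + r))) *
              ((T (j - 1 + d + 2) - t) / (T (j - 1 + d + 2) - T (j - 1 + 1)))
                * bspl T d (j - 1 + 1) t
          = (y - t) * ((∏ r ∈ Icc 1 d, (y - T (j + r))) * bspl T d j t) := by
      intro j hj
      simp only [Finset.mem_Icc] at hj
      have hj1 : 1 ≤ j := by omega
      have hjj : j - 1 + 1 = j := by omega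
      rw [hjj]
      by_cases hz : bspl T d j t = 0
      · rw [hz]; ring
      · have hs := bspl_support T hmono d j t hz
        have hD : 0 < T (j + d + 1) - T j := by
          have := hs.1; have := hs.2; linarith
        have hP1 : ∏ r ∈ Icc 1 (d + 1), (y - T (j + r))
            = (∏ r ∈ Icc 1 d, (y - T (j + r))) * (y - T (j + d + 1)) := by
          rw [Finset.prod_Icc_succ_top (by omega : 1 ≤ d + 1)]
          congr 2
        have hP2 : ∏ r ∈ Icc 1 (d + 1), (y - T (j - 1 + r))
            = (y - T j) * ∏ r ∈ Icc 1 d, (y - T (j + r)) := by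
          rw [prod_Icc_shift (fun r => y - T (j - 1 + r)) d]
          congr 1
          · congr 2
          · refine Finset.prod_congr rfl fun r _ => ?_
            congr 2
            omega
        have hI1 : j - 1 + d + 2 = j + d + 1 := by omega
        rw [hP1, hP2, hI1]
        field_simp
        ring
    rw [Finset.sum_congr rfl hpt, ← Finset.mul_sum]
    -- shrink back to Icc (k - d) k
    have hshrink : ∑ j ∈ Icc (a + 1) (k + 1), (∏ r ∈ Icc 1 d, (y - T (j + r))) * bspl T d j t
        = ∑ j ∈ Icc (k - d) k, (∏ r ∈ Icc 1 d, (y - T (j + r))) * bspl T d j t := by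
      rw [← haa]
      symm
      refine Finset.sum_subset (Finset.Icc_subset_Icc_right (by omega)) fun x hx hnx => ?_
      simp only [Finset.mem_Icc] at hx hnx
      have hxk : x = k + 1 := by omega
      rw [hxk, bspl_zero_left T hmono d (k + 1) t h2]
      ring
    rw [hshrink, ih k hdk h1 h2]
    ring

/-- Marsden's identity: for the degree-`n` B-spline basis over a clamped knot vector on
`[0,1]` (knots `T 0 = ⋯ = T n = 0`, `T (n+m+1) = ⋯ = 1`, nondecreasing, every knot of
multiplicity at most `n+1`, i.e. `T j < T (j+n+1)`), and any `y ∈ ℝ`,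
`(y - t)ⁿ = Σ_{j=0}^{n+m} Π_{r=1}^{n} (y - T (j+r)) · N_{j,n}(t)` for all `t ∈ [0,1)`. -/
theorem bspl_marsden_identity (n m : ℕ) (T : ℕ → ℝ) (hmono : Monotone T)
    (h0 : ∀ j ≤ n, T j = 0) (h1 : ∀ j, n + m + 1 ≤ j → T j = 1)
    (hmult : ∀ j ≤ n + m, T j < T (j + n + 1)) (y : ℝ) :
    ∀ t ∈ Set.Ico (0:ℝ) 1,
      (y - t) ^ n =
        ∑ j ∈ Finset.range (n + m + 1),
          (∏ r ∈ Finset.Icc 1 n, (y - T (j + r))) * bspl T n j t := by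
  intro t ht
  obtain ⟨ht0, ht1⟩ := ht
  classical
  set k := Nat.findGreatest (fun j => T j ≤ t) (n + m) with hkdef
  have hPn : T n ≤ t := by rw [h0 n le_rfl]; exact ht0
  have hnk : n ≤ k :=
    Nat.le_findGreatest (P := fun j => T j ≤ t) (by omega : n ≤ n + m) hPn
  have hkb : k ≤ n + m := Nat.findGreatest_le (n + m)
  have hTk : T k ≤ t :=
    Nat.findGreatest_spec (P := fun j => T j ≤ t) (m := n) (by omega) hPn
  have hTk1 : t < T (k + 1) := by
    rcases eq_or_lt_of_le hkb with hke | hkl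
    · have : T (k + 1) = 1 := h1 (k + 1) (by omega)
      rw [this]; exact ht1
    · by_contra hc
      exact Nat.findGreatest_is_greatest (P := fun j => T j ≤ t)
        (by omega : k < k + 1) (by omega) (le_of_not_gt hc)
  have hmain := marsden_local T hmono y t n k hnk hTk hTk1
  rw [← hmain]
  refine Finset.sum_subset ?_ fun x hx hnx => ?_
  · intro x hx
    simp only [Finset.mem_Icc] at hx
    simp only [Finset.mem_range]
    omega
  · simp only [Finset.mem_range] at hx
    simp only [Finset.mem_Icc, not_and_or, not_le] at hnx
    rcases hnx with hlt | hgt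
    · have : T (x + n + 1) ≤ t := le_trans (hmono (by omega)) hTk
      rw [bspl_zero_right T hmono n x t this]; ring
    · have : t < T x := lt_of_lt_of_le hTk1 (hmono (by omega))
      rw [bspl_zero_left T hmono n x t this]; ring
end
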